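/- Assume k has characteristic zero. Let U and V be additive (abelian group)-valued k-functors. Then Ext^1(U, V) = 0: every exact sequence 0 → V → E →^π U → 0 of (abelian group)-valued k-functors splits by a morphism σ : U → E of (abelian group)-valued k-functors with π ∘ σ = id. -/

import Mathlib

universe u

open TensorProduct

/-- An (abelian group)-valued `k`-functor: a functor from commutative `k`-algebras
(in universe `u`) to abelian groups. -/
structure AbFunctor (k : Type u) [Field k] : Type (u + 1) where
  obj : ∀ (B : Type u) [CommRing B] [Algebra k B], Type u
  [grp : ∀ (B : Type u) [CommRing B] [Algebra k B], AddCommGroup (obj B)]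
  map : ∀ {B C : Type u} [CommRing B] [Algebra k B] [CommRing C] [Algebra k C],
    (B →ₐ[k] C) → (obj B →+ obj C)
  map_id : ∀ (B : Type u) [CommRing B] [Algebra k B],
    map (AlgHom.id k B) = AddMonoidHom.id (obj B)
  map_comp : ∀ {B C D : Type u} [CommRing B] [Algebra k B] [CommRing C] [Algebra k C]
    [CommRing D] [Algebra k D] (f : B →ₐ[k] C) (g : C →ₐ[k] D),
    map (g.comp f) = (map g).comp (map f)

attribute [instance] AbFunctor.grp

variable (k : Type u) [Field k]

/-- A morphism of (abelian group)-valued `k`-functors. -/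
structure AbHom (F G : AbFunctor k) where
  app : ∀ (B : Type u) [CommRing B] [Algebra k B], F.obj B →+ G.obj B
  naturality : ∀ {B C : Type u} [CommRing B] [Algebra k B] [CommRing C] [Algebra k C]
    (f : B →ₐ[k] C) (x : F.obj B), G.map f (app B x) = app C (F.map f x)

/-- A natural transformation of the underlying set-valued functors
(not required to be additive). -/
structure SetHom (F G : AbFunctor k) where
  app : ∀ (B : Type u) [CommRing B] [Algebra k B], F.obj B → G.obj B
  naturality : ∀ {B C : Type u} [CommRing B] [Algebra k B] [CommRing C] [Algebra k C]
    (f : B →ₐ[k] C) (x : F.obj B), G.map f (app B x) = app C (F.map f x)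

/-- An isomorphism of (abelian group)-valued `k`-functors. -/
structure AbIso (F G : AbFunctor k) where
  hom : AbHom k F G
  inv : AbHom k G F
  hom_inv : ∀ (B : Type u) [CommRing B] [Algebra k B] (x : F.obj B),
    inv.app B (hom.app B x) = x
  inv_hom : ∀ (B : Type u) [CommRing B] [Algebra k B] (x : G.obj B),
    hom.app B (inv.app B x) = x
/-- `𝔾_a^ι`, the direct sum of `ι` copies of the additive group functor,
`B ↦ ⊕_{i : ι} (B, +)`. -/
noncomputable def Ga (ι : Type u) : AbFunctor k where
  obj B _ _ := ι →₀ B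
  grp B _ _ := inferInstance
  map f := Finsupp.mapRange.addMonoidHom f.toRingHom.toAddMonoidHom
  map_id B _ _ := by
    ext x i
    simp [Finsupp.mapRange.addMonoidHom]
  map_comp f g := by
    ext x i
    rfl
/-- A functor is strictly additive if it is isomorphic to `𝔾_a^α` for some
`α ∈ {0, 1, …, ∞}`. -/
def IsStrictlyAdditive (F : AbFunctor k) : Prop :=
  (∃ n : ℕ, Nonempty (AbIso k F (Ga k (ULift.{u} (Fin n))))) ∨
    Nonempty (AbIso k F (Ga k (ULift.{u} ℕ)))
/-- `0 → F' → F → F'' → 0` is a short exact sequence of (abelian group)-valued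
`k`-functors (exactness is objectwise). -/
structure IsShortExact {F' F F'' : AbFunctor k} (i : AbHom k F' F)
    (p : AbHom k F F'') : Prop where
  inj : ∀ (B : Type u) [CommRing B] [Algebra k B], Function.Injective (i.app B)
  surj : ∀ (B : Type u) [CommRing B] [Algebra k B], Function.Surjective (p.app B)
  exact : ∀ (B : Type u) [CommRing B] [Algebra k B] (x : F.obj B),
    p.app B x = 0 ↔ x ∈ Set.range (i.app B)
/-- A functor is additive if it admits a finite filtration with strictly additive
successive quotients; equivalently (and as formalized here), the class of additive
functors is the smallest class containing the strictly additive functors and closed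
under extensions with strictly additive quotients. -/
inductive IsAdditive : AbFunctor k → Prop
  | of_strict (F : AbFunctor k) : IsStrictlyAdditive k F → IsAdditive F
  | of_ext {F' F F'' : AbFunctor k} (i : AbHom k F' F) (p : AbHom k F F'') :
      IsShortExact k i p → IsAdditive F' → IsStrictlyAdditive k F'' → IsAdditive F

/-!
By dévissage it suffices that every extension `E` of `𝔾_a^ι` by `𝔾_a^κ` splits: an extension
of `U` by `V` is cut into extensions with strictly additive ends by pulling back along, and
quotienting by, the pieces of the filtrations of `U` and `V`. As `𝔾_a^ι` is a direct sum of
copies of `𝔾_a`, it is enough to lift each coordinate inclusion `𝔾_a → 𝔾_a^ι` to `E`.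

By the Yoneda lemma a lift of `X e_j ∈ 𝔾_a^ι(k[X])` to `E(k[X])` gives a natural lift `t` of
sets.
Its failure to be additive is a natural map `𝔾_a² → 𝔾_a^κ`, that is, coordinatewise a
polynomial `A(x, y)` satisfying the cocycle identity
`A(y, z) - A(x + y, z) + A(x, y + z) - A(x, y) = 0`. Comparing coefficients of `z` gives
`∂_y A(x, y) = a(x + y) - a(y)` with `a = ∂_y A(·, 0)`; in characteristic zero `a` has an
antiderivative `G`, so `A(x, y) = G(x + y) - G(x) - G(y)`, and subtracting from `t` the image of
`b ↦ G(b)` under `𝔾_a^κ → E` makes it additive.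
-/

namespace AbFunctor

variable {k : Type u} [Field k]

noncomputable abbrev prod (F G : AbFunctor k) : AbFunctor k where
  obj B _ _ := F.obj B × G.obj B
  map f := (F.map f).prodMap (G.map f)
  map_id _ _ _ := by rw [F.map_id, G.map_id]; rfl
  map_comp f g := by rw [F.map_comp, G.map_comp]; rfl

end AbFunctor

namespace AbHom

variable {k : Type u} [Field k]

def id (F : AbFunctor k) : AbHom k F F where
  app B _ _ := AddMonoidHom.id _
  naturality _ _ := rfl

def comp {F G H : AbFunctor k} (g : AbHom k G H) (f : AbHom k F G) : AbHom k F H where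
  app B _ _ := (g.app B).comp (f.app B)
  naturality φ x := by simp only [AddMonoidHom.comp_apply, g.naturality, f.naturality]

@[simp] lemma comp_app {F G H : AbFunctor k} (g : AbHom k G H) (f : AbHom k F G)
    (B : Type u) [CommRing B] [Algebra k B] (x : F.obj B) :
    (g.comp f).app B x = g.app B (f.app B x) := rfl

noncomputable def prod {F G H : AbFunctor k} (f : AbHom k F G) (g : AbHom k F H) :
    AbHom k F (G.prod H) where
  app B _ _ := (f.app B).prod (g.app B)
  naturality φ x := Prod.ext (f.naturality φ x) (g.naturality φ x)

@[simp] lemma id_app (F : AbFunctor k) (B : Type u) [CommRing B] [Algebra k B] (x : F.obj B) :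
    (AbHom.id F).app B x = x := rfl

@[simp] lemma prod_app {F G H : AbFunctor k} (f : AbHom k F G) (g : AbHom k F H)
    (B : Type u) [CommRing B] [Algebra k B] (x : F.obj B) :
    (f.prod g).app B x = (f.app B x, g.app B x) := rfl

def toSetHom {F G : AbFunctor k} (f : AbHom k F G) : SetHom k F G where
  app B _ _ := f.app B
  naturality := f.naturality

def HasSection {E U : AbFunctor k} (p : AbHom k E U) : Prop :=
  ∃ σ : AbHom k U E, ∀ (B : Type u) [CommRing B] [Algebra k B] (x : U.obj B),
    p.app B (σ.app B x) = x

end AbHom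

namespace SetHom

variable {k : Type u} [Field k]

def toAbHom {F G : AbFunctor k} (t : SetHom k F G)
    (ht : ∀ (B : Type u) [CommRing B] [Algebra k B] (x y : F.obj B),
      t.app B (x + y) = t.app B x + t.app B y) : AbHom k F G where
  app B _ _ := AddMonoidHom.mk' (t.app B) (ht B)
  naturality := t.naturality

lemma exists_lift_of_injective {U E P : AbFunctor k} (j : AbHom k E P)
    (hj : ∀ (B : Type u) [CommRing B] [Algebra k B], Function.Injective (j.app B))
    (g : SetHom k U P)
    (hg : ∀ (B : Type u) [CommRing B] [Algebra k B] (x : U.obj B),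
      g.app B x ∈ Set.range (j.app B)) :
    ∃ h : SetHom k U E, ∀ (B : Type u) [CommRing B] [Algebra k B] (x : U.obj B),
      j.app B (h.app B x) = g.app B x := by
  choose h hh using hg
  refine ⟨⟨h, fun f x => hj _ ?_⟩, hh⟩
  rw [← j.naturality, hh, hh, g.naturality]

end SetHom

namespace AbHom

variable {k : Type u} [Field k]

lemma exists_lift_of_injective {U E P : AbFunctor k} (j : AbHom k E P)
    (hj : ∀ (B : Type u) [CommRing B] [Algebra k B], Function.Injective (j.app B))
    (g : AbHom k U P)
    (hg : ∀ (B : Type u) [CommRing B] [Algebra k B] (x : U.obj B),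
      g.app B x ∈ Set.range (j.app B)) :
    ∃ h : AbHom k U E, ∀ (B : Type u) [CommRing B] [Algebra k B] (x : U.obj B),
      j.app B (h.app B x) = g.app B x := by
  obtain ⟨h, hh⟩ := SetHom.exists_lift_of_injective j hj g.toSetHom hg
  refine ⟨h.toAbHom fun B _ _ x y => hj B ?_, hh⟩
  rw [map_add, hh, hh, hh]
  exact map_add _ _ _

lemma exists_desc_of_surjective {F G Z : AbFunctor k} (p : AbHom k F G)
    (hp : ∀ (B : Type u) [CommRing B] [Algebra k B], Function.Surjective (p.app B))
    (g : AbHom k F Z)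
    (hg : ∀ (B : Type u) [CommRing B] [Algebra k B] (x : F.obj B),
      p.app B x = 0 → g.app B x = 0) :
    ∃ h : AbHom k G Z, ∀ (B : Type u) [CommRing B] [Algebra k B] (x : F.obj B),
      h.app B (p.app B x) = g.app B x := by
  have hfac : ∀ (B : Type u) [CommRing B] [Algebra k B] (x y : F.obj B),
      p.app B x = p.app B y → g.app B x = g.app B y := fun B _ _ x y hxy =>
    sub_eq_zero.1 (by rw [← map_sub]; exact hg B _ (by rw [map_sub, hxy, sub_self]))
  choose s hs using hp
  let h : SetHom k G Z :=
    ⟨fun B _ _ y => g.app B (s B y), fun f y => by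
      rw [g.naturality]
      refine hfac _ _ _ ?_
      rw [← p.naturality, hs, hs]⟩
  refine ⟨h.toAbHom fun B _ _ x y => ?_, fun B _ _ x => hfac B _ _ (hs B _)⟩
  show g.app B (s B (x + y)) = g.app B (s B x) + g.app B (s B y)
  rw [← map_add]
  exact hfac B _ _ (by rw [hs, map_add, hs, hs])

variable {W E : AbFunctor k}

noncomputable def coker (s : AbHom k W E) : AbFunctor k where
  obj B _ _ := E.obj B ⧸ (s.app B).range
  map f := QuotientAddGroup.map _ _ (E.map f) (by
    rintro _ ⟨w, rfl⟩
    exact ⟨W.map f w, (s.naturality f w).symm⟩)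
  map_id B _ _ := by
    ext e
    exact congrArg QuotientAddGroup.mk (DFunLike.congr_fun (E.map_id B) e)
  map_comp f g := by
    ext e
    exact congrArg QuotientAddGroup.mk (DFunLike.congr_fun (E.map_comp f g) e)

noncomputable def toCoker (s : AbHom k W E) : AbHom k E s.coker where
  app _ _ _ := QuotientAddGroup.mk' _
  naturality _ _ := rfl

lemma isShortExact_toCoker (s : AbHom k W E)
    (hs : ∀ (B : Type u) [CommRing B] [Algebra k B], Function.Injective (s.app B)) :
    IsShortExact k s s.toCoker where
  inj := hs
  surj _ _ _ := QuotientAddGroup.mk'_surjective _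
  exact _ _ _ _ := QuotientAddGroup.eq_zero_iff _

variable {Q U : AbFunctor k}

def pullbackSubgroup (p : AbHom k E Q) (f : AbHom k U Q) (B : Type u) [CommRing B]
    [Algebra k B] : AddSubgroup (E.obj B × U.obj B) :=
  AddMonoidHom.eqLocus ((p.app B).comp (AddMonoidHom.fst _ _))
    ((f.app B).comp (AddMonoidHom.snd _ _))

noncomputable def pullback (p : AbHom k E Q) (f : AbHom k U Q) : AbFunctor k where
  obj B _ _ := pullbackSubgroup p f B
  map {B C} _ _ _ _ g := (((E.prod U).map g).comp (pullbackSubgroup p f B).subtype).codRestrict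
    (pullbackSubgroup p f C) fun x => by
      show p.app C (E.map g x.1.1) = f.app C (U.map g x.1.2)
      rw [← p.naturality, ← f.naturality]
      exact congrArg (Q.map g) x.2
  map_id B _ _ := by
    refine DFunLike.ext _ _ fun x => Subtype.ext ?_
    exact DFunLike.congr_fun ((E.prod U).map_id B) x.1
  map_comp f g := by
    refine DFunLike.ext _ _ fun x => Subtype.ext ?_
    exact DFunLike.congr_fun ((E.prod U).map_comp f g) x.1

variable (p : AbHom k E Q) (f : AbHom k U Q)

noncomputable def pullbackFst : AbHom k (pullback p f) E where
  app B _ _ := (AddMonoidHom.fst _ _).comp (pullbackSubgroup p f B).subtype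
  naturality _ _ := rfl

noncomputable def pullbackSnd : AbHom k (pullback p f) U where
  app B _ _ := (AddMonoidHom.snd _ _).comp (pullbackSubgroup p f B).subtype
  naturality _ _ := rfl

lemma pullback_condition {B : Type u} [CommRing B] [Algebra k B] (x : (pullback p f).obj B) :
    p.app B ((pullbackFst p f).app B x) = f.app B ((pullbackSnd p f).app B x) :=
  x.2

end AbHom

namespace AbIso

variable {k : Type u} [Field k] {F G : AbFunctor k}

lemma injective_hom (e : AbIso k F G) (B : Type u) [CommRing B] [Algebra k B] :
    Function.Injective (e.hom.app B) :=
  Function.LeftInverse.injective (e.hom_inv B)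

lemma surjective_inv (e : AbIso k F G) (B : Type u) [CommRing B] [Algebra k B] :
    Function.Surjective (e.inv.app B) :=
  Function.LeftInverse.surjective (e.hom_inv B)

end AbIso

namespace IsShortExact

variable {k : Type u} [Field k] {W E Q : AbFunctor k} {i : AbHom k W E} {p : AbHom k E Q}

lemma app_app_eq_zero (h : IsShortExact k i p) (B : Type u) [CommRing B] [Algebra k B]
    (w : W.obj B) : p.app B (i.app B w) = 0 :=
  (h.exact B _).2 ⟨w, rfl⟩

lemma exists_pullback (h : IsShortExact k i p) {U : AbFunctor k} (f : AbHom k U Q) :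
    ∃ (P : AbFunctor k) (iP : AbHom k W P) (pP : AbHom k P U) (g : AbHom k P E),
      IsShortExact k iP pP ∧ ∀ (B : Type u) [CommRing B] [Algebra k B] (x : P.obj B),
        p.app B (g.app B x) = f.app B (pP.app B x) := by
  let iP : AbHom k W (p.pullback f) :=
    { app B _ _ := ((i.app B).prod 0).codRestrict _ fun w => by
        show p.app B (i.app B w) = f.app B 0
        rw [h.app_app_eq_zero, map_zero]
      naturality g w := Subtype.ext <| Prod.ext (i.naturality g w) (map_zero (U.map g)) }
  refine ⟨_, iP, p.pullbackSnd f, p.pullbackFst f, ⟨fun B _ _ w w' hw => ?_, fun B _ _ u => ?_,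
    fun B _ _ x => ⟨fun hx => ?_, ?_⟩⟩, fun B _ _ => p.pullback_condition f⟩
  · exact h.inj B (congrArg (fun x => x.1.1) hw)
  · obtain ⟨e, he⟩ := h.surj B (f.app B u)
    exact ⟨⟨(e, u), he⟩, rfl⟩
  · have : p.app B x.1.1 = 0 := by
      rw [show p.app B x.1.1 = f.app B x.1.2 from x.2]
      exact (congrArg (f.app B) hx).trans (map_zero _)
    obtain ⟨w, hw⟩ := (h.exact B _).1 this
    exact ⟨w, Subtype.ext <| Prod.ext hw hx.symm⟩
  · rintro ⟨w, rfl⟩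
    rfl

lemma comp_iso {V V' E U U' : AbFunctor k} {i : AbHom k V E} {p : AbHom k E U}
    (h : IsShortExact k i p) (eV : AbIso k V V') (eU : AbIso k U U') :
    IsShortExact k (i.comp eV.inv) (eU.hom.comp p) where
  inj B _ _ := (h.inj B).comp (Function.LeftInverse.injective (eV.inv_hom B))
  surj B _ _ y := by
    obtain ⟨e, he⟩ := h.surj B (eU.inv.app B y)
    exact ⟨e, by rw [AbHom.comp_app, he, eU.inv_hom]⟩
  exact B _ _ x := by
    rw [AbHom.comp_app, map_eq_zero_iff _ (eU.injective_hom B), h.exact]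
    exact ((eV.surjective_inv B).range_comp _).symm ▸ Iff.rfl

/-- For `V' ⊆ V ⊆ E`, the sequence `V/V' → E/V' → E/V` is short exact. -/
lemma quotient_right {V' V V'' E U Q : AbFunctor k} {j : AbHom k V' V} {q : AbHom k V V''}
    {i : AbHom k V E} {p : AbHom k E U} {r : AbHom k E Q} {i'' : AbHom k V'' Q}
    {p'' : AbHom k Q U} (hjq : IsShortExact k j q) (hip : IsShortExact k i p)
    (hr : IsShortExact k (i.comp j) r)
    (hi'' : ∀ (B : Type u) [CommRing B] [Algebra k B] (v : V.obj B),
      i''.app B (q.app B v) = r.app B (i.app B v))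
    (hp'' : ∀ (B : Type u) [CommRing B] [Algebra k B] (e : E.obj B),
      p''.app B (r.app B e) = p.app B e) :
    IsShortExact k i'' p'' where
  inj B _ _ := by
    refine (injective_iff_map_eq_zero _).2 fun v'' hv'' => ?_
    obtain ⟨v, rfl⟩ := hjq.surj B v''
    rw [hi''] at hv''
    obtain ⟨w, hw⟩ := (hr.exact B _).1 hv''
    rw [← hip.inj B hw]
    exact hjq.app_app_eq_zero B w
  surj B _ _ u := by
    obtain ⟨e, rfl⟩ := hip.surj B u
    exact ⟨r.app B e, hp'' B e⟩
  exact B _ _ y := by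
    obtain ⟨e, rfl⟩ := hr.surj B y
    rw [hp'', hip.exact]
    constructor
    · rintro ⟨v, rfl⟩
      exact ⟨q.app B v, hi'' B v⟩
    · rintro ⟨v'', hv''⟩
      obtain ⟨v, rfl⟩ := hjq.surj B v''
      rw [hi'', ← sub_eq_zero, ← map_sub] at hv''
      obtain ⟨w, hw⟩ := (hr.exact B _).1 hv''
      exact ⟨v - j.app B w, by rw [map_sub, ← AbHom.comp_app, hw, sub_sub_cancel]⟩

/-- If `U' ⊆ U` lifts to `U' ⊆ E` along `E → U`, then `V → E/U' → U/U'` is short exact. -/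
lemma quotient_left {U' U U'' V E Q : AbFunctor k} {j : AbHom k U' U} {q : AbHom k U U''}
    {i : AbHom k V E} {p : AbHom k E U} {s : AbHom k U' E} {r : AbHom k E Q}
    {p'' : AbHom k Q U''} (hjq : IsShortExact k j q) (hip : IsShortExact k i p)
    (hs : ∀ (B : Type u) [CommRing B] [Algebra k B] (u : U'.obj B),
      p.app B (s.app B u) = j.app B u)
    (hr : IsShortExact k s r)
    (hp'' : ∀ (B : Type u) [CommRing B] [Algebra k B] (e : E.obj B),
      p''.app B (r.app B e) = q.app B (p.app B e)) :
    IsShortExact k (r.comp i) p'' where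
  inj B _ _ := by
    refine (injective_iff_map_eq_zero _).2 fun v hv => hip.inj B ?_
    obtain ⟨u, hu⟩ := (hr.exact B _).1 hv
    have : j.app B u = 0 := by rw [← hs, hu, hip.app_app_eq_zero]
    rw [← hu, (injective_iff_map_eq_zero _).1 (hjq.inj B) u this, map_zero, map_zero]
  surj B _ _ u'' := by
    obtain ⟨u, rfl⟩ := hjq.surj B u''
    obtain ⟨e, rfl⟩ := hip.surj B u
    exact ⟨r.app B e, hp'' B e⟩
  exact B _ _ y := by
    obtain ⟨e, rfl⟩ := hr.surj B y
    rw [hp'', hjq.exact]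
    constructor
    · rintro ⟨u, hu⟩
      have : p.app B (e - s.app B u) = 0 := by rw [map_sub, hs, hu, sub_self]
      obtain ⟨v, hv⟩ := (hip.exact B _).1 this
      exact ⟨v, by rw [AbHom.comp_app, hv, map_sub, hr.app_app_eq_zero, sub_zero]⟩
    · rintro ⟨v, hv⟩
      rw [AbHom.comp_app, eq_comm, ← sub_eq_zero, ← map_sub] at hv
      obtain ⟨u, hu⟩ := (hr.exact B _).1 hv
      exact ⟨u, by rw [← hs, hu, map_sub, hip.app_app_eq_zero, sub_zero]⟩

end IsShortExact

section ExtVanishes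

variable {k : Type u} [Field k]

/-- `Ext¹(U, V) = 0`. -/
def ExtVanishes (U V : AbFunctor k) : Prop :=
  ∀ ⦃E : AbFunctor k⦄ (i : AbHom k V E) (p : AbHom k E U), IsShortExact k i p → p.HasSection

lemma ExtVanishes.of_iso {U U' V V' : AbFunctor k} (eU : AbIso k U U') (eV : AbIso k V V')
    (h : ExtVanishes U' V') : ExtVanishes U V := by
  intro E i p hip
  obtain ⟨σ, hσ⟩ := h _ _ (hip.comp_iso eV eU)
  exact ⟨σ.comp eU.hom, fun B _ _ x => eU.injective_hom B (hσ B _)⟩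

theorem ExtVanishes.of_shortExact_right {U V' V V'' : AbFunctor k} {j : AbHom k V' V}
    {q : AbHom k V V''} (hjq : IsShortExact k j q) (h' : ExtVanishes U V')
    (h'' : ExtVanishes U V'') : ExtVanishes U V := by
  intro E i p hip
  set s := i.comp j
  have hs := s.isShortExact_toCoker fun B _ _ => (hip.inj B).comp (hjq.inj B)
  obtain ⟨p'', hp''⟩ := s.toCoker.exists_desc_of_surjective hs.surj p fun B _ _ e he => by
    obtain ⟨w, rfl⟩ := (hs.exact B e).1 he
    exact hip.app_app_eq_zero B _
  obtain ⟨i'', hi''⟩ := q.exists_desc_of_surjective hjq.surj (s.toCoker.comp i)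
    fun B _ _ v hv => by
      obtain ⟨w, rfl⟩ := (hjq.exact B v).1 hv
      exact hs.app_app_eq_zero B w
  obtain ⟨σ'', hσ''⟩ := h'' i'' p'' (hjq.quotient_right hip hs hi'' hp'')
  obtain ⟨P, iP, pP, g, hP, hg⟩ := hs.exists_pullback σ''
  obtain ⟨σ, hσ⟩ := h' iP pP hP
  refine ⟨g.comp σ, fun B _ _ x => ?_⟩
  rw [AbHom.comp_app, ← hp'', hg, hσ, hσ'']

theorem ExtVanishes.of_shortExact_left {U' U U'' V : AbFunctor k} {j : AbHom k U' U}
    {q : AbHom k U U''} (hjq : IsShortExact k j q) (h' : ExtVanishes U' V)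
    (h'' : ExtVanishes U'' V) : ExtVanishes U V := by
  intro E i p hip
  obtain ⟨P, iP, pP, g, hP, hg⟩ := hip.exists_pullback j
  obtain ⟨σ', hσ'⟩ := h' iP pP hP
  set s := g.comp σ'
  have hps : ∀ (B : Type u) [CommRing B] [Algebra k B] (u : U'.obj B),
      p.app B (s.app B u) = j.app B u := fun B _ _ u => by
    rw [AbHom.comp_app, hg, hσ']
  have hs := s.isShortExact_toCoker fun B _ _ a b hab =>
    hjq.inj B (by rw [← hps, ← hps, hab])
  obtain ⟨p'', hp''⟩ := s.toCoker.exists_desc_of_surjective hs.surj (q.comp p)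
    fun B _ _ e he => by
      obtain ⟨u, rfl⟩ := (hs.exact B e).1 he
      rw [AbHom.comp_app, hps]
      exact hjq.app_app_eq_zero B u
  have hQ := hjq.quotient_left hip hps hs hp''
  obtain ⟨σ'', hσ''⟩ := h'' _ _ hQ
  -- `E` embeds into `E/U' × U`, and `x ↦ (σ'' (q x), x)` lands in its image.
  obtain ⟨σ, hσ⟩ := (s.toCoker.prod p).exists_lift_of_injective
    (fun B _ _ => (injective_iff_map_eq_zero _).2 fun e he => by
      obtain ⟨v, rfl⟩ := (hip.exact B e).1 (congrArg Prod.snd he)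
      rw [(injective_iff_map_eq_zero _).1 (hQ.inj B) v (congrArg Prod.fst he), map_zero])
    ((σ''.comp q).prod (AbHom.id U)) fun B _ _ x => by
      obtain ⟨e, rfl⟩ := hip.surj B x
      have : p''.app B (s.toCoker.app B e - σ''.app B (q.app B (p.app B e))) = 0 := by
        rw [map_sub, hσ'', hp'', AbHom.comp_app, sub_self]
      obtain ⟨v, hv⟩ := (hQ.exact B _).1 this
      rw [AbHom.comp_app] at hv
      refine ⟨e - i.app B v, ?_⟩
      rw [AbHom.prod_app, AbHom.prod_app, map_sub, hv, sub_sub_cancel, map_sub,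
        hip.app_app_eq_zero, sub_zero, AbHom.comp_app, AbHom.id_app]
  exact ⟨σ, fun B _ _ x => congrArg Prod.snd (hσ B x)⟩

end ExtVanishes

namespace Polynomial

section Antideriv

variable {K : Type*} [Field K]

noncomputable def antideriv (p : K[X]) : K[X] :=
  p.sum fun n a => C (a / (n + 1)) * X ^ (n + 1)

@[simp] lemma antideriv_zero : antideriv (0 : K[X]) = 0 := by
  simp [antideriv]

lemma coeff_zero_antideriv (p : K[X]) : (antideriv p).coeff 0 = 0 := by
  simp [antideriv, Polynomial.sum_def, coeff_X_pow]

lemma derivative_antideriv [CharZero K] (p : K[X]) : derivative (antideriv p) = p := by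
  conv_rhs => rw [← sum_C_mul_X_pow_eq p]
  rw [antideriv, Polynomial.sum_def, map_sum, Polynomial.sum_def]
  refine Finset.sum_congr rfl fun n _ => ?_
  rw [derivative_C_mul_X_pow, Nat.add_sub_cancel, Nat.cast_add_one,
    div_mul_cancel₀ _ (Nat.cast_add_one_ne_zero n)]

end Antideriv

variable {R : Type*} [CommRing R]

lemma derivative_aeval {S : Type*} [CommRing S] [Algebra R S] (p : R[X]) (q : S[X]) :
    derivative (aeval q p) = aeval q (derivative p) * derivative q := by
  have hcomp : ∀ p' : R[X], aeval q p' = (p'.map (algebraMap R S)).comp q := fun p' => by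
    rw [comp_eq_aeval, aeval_map_algebraMap]
  rw [hcomp, hcomp, derivative_comp, derivative_map, mul_comm]

/-- Evaluation of `R[x][y]` at `x = a`, `y = b`; the inner variable is `x = C X`. -/
noncomputable def aevalPair {B : Type*} [CommRing B] [Algebra R B] (a b : B) :
    R[X][X] →ₐ[R] B :=
  eval₂AlgHom (aeval a) b fun _ => Commute.all _ _

section AevalPair

variable {B : Type*} [CommRing B] [Algebra R B] (a b : B)

lemma aevalPair_apply (A : R[X][X]) :
    aevalPair a b A = eval₂ ((aeval a : R[X] →ₐ[R] B) : R[X] →+* B) b A := rfl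

@[simp] lemma aevalPair_C (q : R[X]) : aevalPair a b (C q) = aeval a q := eval₂_C _ _

@[simp] lemma aevalPair_X : aevalPair (R := R) a b X = b := eval₂_X _ _

lemma aevalPair_CX : aevalPair (R := R) a b (C X) = a := by simp

lemma aevalPair_algHom_apply {B' : Type*} [CommRing B'] [Algebra R B'] (f : B →ₐ[R] B')
    (A : R[X][X]) : aevalPair (f a) (f b) A = f (aevalPair a b A) := by
  rw [aevalPair_apply, aevalPair_apply, aeval_algHom]
  exact (hom_eval₂ A _ (f : B →+* B') b).symm

lemma aevalPair_X_zero (A : R[X][X]) : aevalPair (X : R[X]) 0 A = A.coeff 0 := by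
  rw [aevalPair_apply, eval₂_at_zero]
  exact aeval_X_left_apply _

end AevalPair

section Cocycle

variable {S : Type*} [CommRing S] [Algebra R S]

lemma aevalPair_C_X (w : S) (A : R[X][X]) :
    aevalPair (C w) X A = A.map ((aeval w : R[X] →ₐ[R] S) : R[X] →+* S) := by
  rw [aevalPair_apply]
  congr 1
  refine RingHom.ext fun q => ?_
  exact aeval_algHom_apply CAlgHom w q

lemma aevalPair_C_X_X (A : R[X][X]) : aevalPair (C X : R[X][X]) X A = A := by
  rw [aevalPair_C_X, aeval_X_left]
  exact map_id

lemma aevalPair_C_C (v w : S) (A : R[X][X]) : aevalPair (C v) (C w) A = C (aevalPair v w A) :=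
  aevalPair_algHom_apply v w CAlgHom A

lemma aevalPair_C_add_X (v w : S) (A : R[X][X]) :
    aevalPair (C v) (C w + X) A =
      taylor w (A.map ((aeval v : R[X] →ₐ[R] S) : R[X] →+* S)) := by
  have := aevalPair_algHom_apply (C v) X ((taylorAlgHom w).restrictScalars R) A
  rw [aevalPair_C_X] at this
  simpa [add_comm] using this

variable (R) in
def IsCocycle (A : R[X][X]) : Prop :=
  letI x : R[X][X][X] := C (C X)
  letI y : R[X][X][X] := C X
  letI z : R[X][X][X] := X
  aevalPair y z A - aevalPair (x + y) z A + aevalPair x (y + z) A - aevalPair x y A = 0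

lemma IsCocycle.derivative_eq {A : R[X][X]} (hA : IsCocycle R A) :
    derivative A = aeval (C X + X) (A.coeff 1) - aeval X (A.coeff 1) := by
  have h1 := congrArg (coeff · 1) hA
  simp only [← C_add, coeff_sub, coeff_add, coeff_zero] at h1
  rw [aevalPair_C_X, aevalPair_C_X, aevalPair_C_add_X, aevalPair_C_C, coeff_map, coeff_map,
    taylor_coeff_one, coeff_C, derivative_map, eval_map] at h1
  rw [← aevalPair_apply, aevalPair_C_X_X, if_neg one_ne_zero, RingHom.coe_coe,
    RingHom.coe_coe] at h1
  linear_combination h1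

theorem IsCocycle.eq_coboundary {K : Type*} [Field K] [CharZero K] {A : K[X][X]}
    (hA : IsCocycle K A) (h0 : A.coeff 0 = 0) :
    A = aeval (C X + X) (antideriv (A.coeff 1)) - aeval (C X) (antideriv (A.coeff 1))
      - aeval X (antideriv (A.coeff 1)) := by
  set G := antideriv (A.coeff 1)
  rw [← sub_eq_zero]
  have hder : derivative (A - (aeval (C X + X) G - aeval (C X) G - aeval X G)) = 0 := by
    rw [map_sub, map_sub, map_sub, hA.derivative_eq, derivative_aeval, derivative_aeval,
      derivative_aeval, derivative_antideriv]
    simp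
  have hcoeff : (aeval (C X + X) G - aeval (C X) G - aeval X G : K[X][X]).coeff 0 = 0 := by
    rw [← aevalPair_X_zero, map_sub, map_sub, ← aeval_algHom_apply, ← aeval_algHom_apply,
      ← aeval_algHom_apply]
    simp [← coeff_zero_eq_aeval_zero', G, coeff_zero_antideriv]
  rw [eq_C_of_derivative_eq_zero hder, coeff_sub, h0, hcoeff, sub_zero, map_zero]

end Cocycle

end Polynomial

open Polynomial

section Yoneda

variable {k : Type u} [Field k]

variable (k) in
noncomputable abbrev Ga1 : AbFunctor k where
  obj B _ _ := B
  grp _ _ _ := inferInstance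
  map f := f.toRingHom.toAddMonoidHom
  map_id _ _ _ := rfl
  map_comp _ _ := rfl

@[simp] lemma Ga1_map {B C : Type u} [CommRing B] [Algebra k B] [CommRing C] [Algebra k C]
    (f : B →ₐ[k] C) (b : B) : (Ga1 k).map f b = f b := rfl

namespace SetHom

noncomputable def ofElem {F : AbFunctor k} (e : F.obj k[X]) : SetHom k (Ga1 k) F where
  app B _ _ b := F.map (aeval b) e
  naturality f b := by
    rw [Ga1_map, aeval_algHom, F.map_comp]
    rfl

lemma app_eq_map_aevalPair {F : AbFunctor k} (t : SetHom k ((Ga1 k).prod (Ga1 k)) F)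
    {B : Type u} [CommRing B] [Algebra k B] (x : ((Ga1 k).prod (Ga1 k)).obj B) :
    t.app B x = F.map (aevalPair x.1 x.2) (t.app k[X][X] (C X, X)) := by
  rw [t.naturality]
  exact congrArg (t.app B) (Prod.ext (aevalPair_CX x.1 x.2).symm (aevalPair_X x.1 x.2).symm)

lemma app_eq_of_app_CX_X {F : AbFunctor k} {t t' : SetHom k ((Ga1 k).prod (Ga1 k)) F}
    (h : t.app k[X][X] (C X, X) = t'.app k[X][X] (C X, X))
    (B : Type u) [CommRing B] [Algebra k B] (x : ((Ga1 k).prod (Ga1 k)).obj B) :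
    t.app B x = t'.app B x := by
  rw [app_eq_map_aevalPair t x, app_eq_map_aevalPair t' x, h]

def defect {F G : AbFunctor k} (t : SetHom k F G) : SetHom k (F.prod F) G where
  app B _ _ x := t.app B (x.1 + x.2) - t.app B x.1 - t.app B x.2
  naturality f x := by
    simp only [map_sub, t.naturality, map_add]
    rfl

lemma defect_cocycle {F G : AbFunctor k} (t : SetHom k F G) (B : Type u) [CommRing B]
    [Algebra k B] (x y z : F.obj B) :
    t.defect.app B (y, z) - t.defect.app B (x + y, z) + t.defect.app B (x, y + z)
      - t.defect.app B (x, y) = 0 := by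
  show t.app B (y + z) - t.app B y - t.app B z
    - (t.app B (x + y + z) - t.app B (x + y) - t.app B z)
    + (t.app B (x + (y + z)) - t.app B x - t.app B (y + z))
    - (t.app B (x + y) - t.app B x - t.app B y) = 0
  rw [add_assoc]
  abel

end SetHom

end Yoneda

section Core

variable {k : Type u} [Field k]

lemma SetHom.exists_lift_Ga1_of_surjective {E U : AbFunctor k} {p : AbHom k E U}
    (hp : ∀ (B : Type u) [CommRing B] [Algebra k B], Function.Surjective (p.app B))
    (g : AbHom k (Ga1 k) U) :
    ∃ t : SetHom k (Ga1 k) E, (∀ (B : Type u) [CommRing B] [Algebra k B] (b : B),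
      p.app B (t.app B b) = g.app B b) ∧ ∀ (B : Type u) [CommRing B] [Algebra k B],
        t.app B 0 = 0 := by
  obtain ⟨e, he⟩ := hp k[X] (g.app k[X] X)
  have hcomp : ∀ (B : Type u) [CommRing B] [Algebra k B],
      (aeval (0 : B)).comp (aeval (0 : k[X])) = aeval 0 := fun B _ _ => by
    rw [← aeval_algHom, map_zero]
  -- `e - e(0)` is a lift of `X` vanishing at `0`.
  refine ⟨SetHom.ofElem (e - E.map (aeval 0) e), fun B _ _ b => ?_, fun B _ _ => ?_⟩
  · show p.app B (E.map (aeval b) (e - E.map (aeval 0) e)) = g.app B b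
    rw [← p.naturality, map_sub, ← p.naturality, he, g.naturality, map_sub, g.naturality,
      g.naturality]
    simp
  · show E.map (aeval 0) (e - E.map (aeval 0) e) = 0
    rw [map_sub, ← AddMonoidHom.comp_apply, ← E.map_comp, hcomp, sub_self]

theorem SetHom.exists_defect_eq [CharZero k] {κ : Type u}
    (d : SetHom k ((Ga1 k).prod (Ga1 k)) (Ga k κ))
    (h0 : ∀ (B : Type u) [CommRing B] [Algebra k B] (x : B), d.app B (x, 0) = 0)
    (hd : ∀ (B : Type u) [CommRing B] [Algebra k B] (x y z : B),
      d.app B (y, z) - d.app B (x + y, z) + d.app B (x, y + z) - d.app B (x, y) = 0) :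
    ∃ γ : SetHom k (Ga1 k) (Ga k κ), ∀ (B : Type u) [CommRing B] [Algebra k B]
      (x : ((Ga1 k).prod (Ga1 k)).obj B), γ.defect.app B x = d.app B x := by
  set D : κ →₀ k[X][X] := d.app k[X][X] (C X, X)
  have hD : ∀ (B : Type u) [CommRing B] [Algebra k B] (x : ((Ga1 k).prod (Ga1 k)).obj B),
      d.app B x = (D.mapRange (aevalPair x.1 x.2) (map_zero _) : κ →₀ B) :=
    fun B _ _ x => d.app_eq_map_aevalPair x
  have hcocycle : ∀ j, IsCocycle k (D j) := fun j => by
    have := hd k[X][X][X] (C (C X)) (C X) X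
    rw [hD, hD, hD, hD] at this
    exact congrArg (fun v : κ →₀ k[X][X][X] => v j) this
  have hnormal : ∀ j, (D j).coeff 0 = 0 := fun j => by
    have := h0 k[X] X
    rw [hD] at this
    rw [← aevalPair_X_zero]
    exact congrArg (fun v : κ →₀ k[X] => v j) this
  refine ⟨SetHom.ofElem (D.mapRange (fun A => antideriv (A.coeff 1)) (by simp)),
    SetHom.app_eq_of_app_CX_X (Finsupp.ext fun j => ?_)⟩
  rw [(hcocycle j).eq_coboundary (hnormal j)]
  rfl

theorem IsShortExact.exists_lift_Ga1 [CharZero k] {κ : Type u} {E U : AbFunctor k}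
    {i : AbHom k (Ga k κ) E} {p : AbHom k E U} (h : IsShortExact k i p)
    (g : AbHom k (Ga1 k) U) :
    ∃ s : AbHom k (Ga1 k) E, ∀ (B : Type u) [CommRing B] [Algebra k B] (b : B),
      p.app B (s.app B b) = g.app B b := by
  obtain ⟨t, htp, ht0⟩ := SetHom.exists_lift_Ga1_of_surjective h.surj g
  obtain ⟨d, hd⟩ := SetHom.exists_lift_of_injective i h.inj t.defect fun B _ _ x =>
    (h.exact B _).1 <| by
      show p.app B (t.app B (x.1 + x.2) - t.app B x.1 - t.app B x.2) = 0
      rw [map_sub, map_sub, htp, htp, htp, map_add, add_sub_cancel_left, sub_self]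
  obtain ⟨γ, hγ⟩ := d.exists_defect_eq
    (fun B _ _ x => h.inj B <| by
      rw [hd, map_zero]
      show t.app B (x + 0) - t.app B x - t.app B 0 = 0
      rw [add_zero, sub_self, ht0, sub_zero])
    (fun B _ _ x y z => h.inj B <| by
      simpa only [map_sub, map_add, hd, map_zero] using t.defect_cocycle B x y z)
  let s : SetHom k (Ga1 k) E :=
    ⟨fun B _ _ b => t.app B b - i.app B (γ.app B b), fun f b => by
      rw [map_sub, t.naturality, i.naturality, γ.naturality]⟩
  refine ⟨s.toAbHom fun B _ _ x y => ?_, fun B _ _ b => ?_⟩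
  · have key := (hd B (x, y)).symm.trans (congrArg (i.app B) (hγ B (x, y))).symm
    change t.app B (x + y) - t.app B x - t.app B y
      = i.app B (γ.app B (x + y) - γ.app B x - γ.app B y) at key
    rw [map_sub, map_sub] at key
    show t.app B (x + y) - i.app B (γ.app B (x + y))
      = (t.app B x - i.app B (γ.app B x)) + (t.app B y - i.app B (γ.app B y))
    linear_combination (norm := abel) key
  · show p.app B (t.app B b - i.app B (γ.app B b)) = g.app B b
    rw [map_sub, htp, h.app_app_eq_zero, sub_zero]

end Core

namespace Ga

variable {k : Type u} [Field k] {ι : Type u}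

noncomputable def single (j : ι) : AbHom k (Ga1 k) (Ga k ι) where
  app _ _ _ := Finsupp.singleAddHom j
  naturality f _ := Finsupp.mapRange_single (hf := map_zero f)

noncomputable def desc {F : AbFunctor k} (s : ι → AbHom k (Ga1 k) F) : AbHom k (Ga k ι) F where
  app B _ _ := Finsupp.liftAddHom fun j => (s j).app B
  naturality {B C} _ _ _ _ f x := by
    revert x
    show ∀ x : ι →₀ B, F.map f (Finsupp.liftAddHom (fun j => (s j).app B) x)
      = Finsupp.liftAddHom (fun j => (s j).app C)
        (Finsupp.mapRange.addMonoidHom (f : B →+ C) x)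
    intro x
    induction x using Finsupp.induction_linear with
    | zero => rw [map_zero, map_zero, map_zero, map_zero]
    | add x y hx hy => rw [map_add, map_add, map_add, map_add, hx, hy]
    | single j b =>
      rw [Finsupp.mapRange.addMonoidHom_apply, Finsupp.mapRange_single,
        Finsupp.liftAddHom_apply_single, Finsupp.liftAddHom_apply_single, (s j).naturality]
      rfl

theorem extVanishes [CharZero k] (κ : Type u) : ExtVanishes (Ga k ι) (Ga k κ) := by
  intro E i p h
  choose s hs using fun j : ι => h.exists_lift_Ga1 (single j)
  refine ⟨desc s, fun B _ _ => ?_⟩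
  show ∀ x : ι →₀ B, p.app B (Finsupp.liftAddHom (fun j => (s j).app B) x) = x
  intro x
  induction x using Finsupp.induction_linear with
  | zero => rw [map_zero, map_zero]; rfl
  | add x y hx hy => rw [map_add, map_add, hx, hy]; rfl
  | single j b =>
    rw [Finsupp.liftAddHom_apply_single, hs]
    rfl

end Ga

lemma IsStrictlyAdditive.exists_iso {k : Type u} [Field k] {F : AbFunctor k}
    (h : IsStrictlyAdditive k F) : ∃ ι : Type u, Nonempty (AbIso k F (Ga k ι)) := by
  rcases h with ⟨n, h⟩ | h
  exacts [⟨_, h⟩, ⟨_, h⟩]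

section

variable {k : Type u} [Field k] [CharZero k]

lemma extVanishes_of_isStrictlyAdditive {U V : AbFunctor k} (hU : IsStrictlyAdditive k U)
    (hV : IsStrictlyAdditive k V) : ExtVanishes U V := by
  obtain ⟨ι, ⟨eU⟩⟩ := hU.exists_iso
  obtain ⟨κ, ⟨eV⟩⟩ := hV.exists_iso
  exact (Ga.extVanishes κ).of_iso eU eV

lemma extVanishes_of_isStrictlyAdditive_of_isAdditive {U V : AbFunctor k}
    (hU : IsStrictlyAdditive k U) (hV : IsAdditive k V) : ExtVanishes U V := by
  induction hV with
  | of_strict V hV => exact extVanishes_of_isStrictlyAdditive hU hV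
  | of_ext _ _ hse _ hV'' ih =>
    exact .of_shortExact_right hse ih (extVanishes_of_isStrictlyAdditive hU hV'')

lemma extVanishes_of_isAdditive {U V : AbFunctor k} (hU : IsAdditive k U)
    (hV : IsAdditive k V) : ExtVanishes U V := by
  induction hU with
  | of_strict U hU => exact extVanishes_of_isStrictlyAdditive_of_isAdditive hU hV
  | of_ext _ _ hse _ hU'' ih =>
    exact .of_shortExact_left hse ih (extVanishes_of_isStrictlyAdditive_of_isAdditive hU'' hV)

end

/-- In characteristic zero, `Ext¹(U, V) = 0` for `U`, `V` additive:
every extension `0 → V → E → U → 0` splits. -/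
theorem ext_additive_vanishes_char_zero {k : Type u} [Field k] [CharZero k]
    {U V E : AbFunctor k} (hU : IsAdditive k U) (hV : IsAdditive k V)
    (i : AbHom k V E) (pi : AbHom k E U) (hex : IsShortExact k i pi) :
    ∃ σ : AbHom k U E, ∀ (B : Type u) [CommRing B] [Algebra k B] (x : U.obj B),
      pi.app B (σ.app B x) = x :=
  extVanishes_of_isAdditive hU hV i pi hex
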